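/- Let 0 ≤ h' ≤ h'' and g ≥ 0 be real numbers. Then the function ρ ↦ max(0, log((1+gρ)/(1+h''ρ))) − max(0, log((1+gρ)/(1+h'ρ))) is monotone nonincreasing on [0, ∞). (This is the sign condition D ≤ 0 of Proposition 3 verified in Appendix F, which yields the second part of Theorem 3: the optimal transmission power is nonincreasing in the eavesdropper's channel gain.) -/
import Mathlib

lemma pos_log_eq (g h ρ : ℝ) (hg : 0 ≤ g) (hh : 0 ≤ h) (hρ : 0 ≤ ρ) :
    max 0 (Real.log ((1 + g * ρ) / (1 + h * ρ)))
      = Real.log (1 + max g h * ρ) - Real.log (1 + h * ρ) := by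
  have p1 : 0 < 1 + g * ρ := by positivity
  have p2 : 0 < 1 + h * ρ := by positivity
  rw [Real.log_div (ne_of_gt p1) (ne_of_gt p2)]
  rcases le_total g h with hgh | hgh
  · rw [max_eq_right hgh, max_eq_left]
    · ring
    · have : Real.log (1 + g * ρ) ≤ Real.log (1 + h * ρ) :=
        Real.log_le_log p1 (by nlinarith)
      linarith
  · rw [max_eq_left hgh, max_eq_right]
    have : Real.log (1 + h * ρ) ≤ Real.log (1 + g * ρ) :=
      Real.log_le_log p2 (by nlinarith)
    linarith

lemma key_antitone (c d : ℝ) (hc : 0 ≤ c) (hcd : c ≤ d) {x y : ℝ}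
    (hx : 0 ≤ x) (hy : 0 ≤ y) (hxy : x ≤ y) :
    Real.log (1 + c * y) - Real.log (1 + d * y)
      ≤ Real.log (1 + c * x) - Real.log (1 + d * x) := by
  have hd : 0 ≤ d := le_trans hc hcd
  have p1 : 0 < 1 + c * x := by positivity
  have p2 : 0 < 1 + d * x := by positivity
  have p3 : 0 < 1 + c * y := by positivity
  have p4 : 0 < 1 + d * y := by positivity
  have hmul : (1 + c * y) * (1 + d * x) ≤ (1 + c * x) * (1 + d * y) := by
    nlinarith [mul_nonneg (sub_nonneg.2 hcd) (sub_nonneg.2 hxy)]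
  have := Real.log_le_log (by positivity) hmul
  rw [Real.log_mul (ne_of_gt p3) (ne_of_gt p2),
      Real.log_mul (ne_of_gt p1) (ne_of_gt p4)] at this
  linarith

/-- For `0 ≤ h' ≤ h''` and `g ≥ 0`, the function
`ρ ↦ [log((1+gρ)/(1+h''ρ))]⁺ − [log((1+gρ)/(1+h'ρ))]⁺` is monotone nonincreasing
on `[0, ∞)` (the sign condition `D ≤ 0` of Proposition 3 / Appendix F). -/
theorem D_nonpos_in_eavesdropper_gain (h' h'' g : ℝ)
    (hh' : 0 ≤ h') (hhh : h' ≤ h'') (hg : 0 ≤ g) :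
    AntitoneOn
      (fun ρ => max 0 (Real.log ((1 + g * ρ) / (1 + h'' * ρ)))
              - max 0 (Real.log ((1 + g * ρ) / (1 + h' * ρ))))
      (Set.Ici (0 : ℝ)) := by
  have hh'' : 0 ≤ h'' := le_trans hh' hhh
  intro x hx y hy hxy
  simp only [Set.mem_Ici] at hx hy
  simp only
  rw [pos_log_eq g h'' x hg hh'' hx, pos_log_eq g h' x hg hh' hx,
      pos_log_eq g h'' y hg hh'' hy, pos_log_eq g h' y hg hh' hy]
  rcases le_total g h' with h1 | h1
  · rw [max_eq_right h1, max_eq_right (le_trans h1 hhh)]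
    linarith
  · rcases le_total g h'' with h2 | h2
    · rw [max_eq_left h1, max_eq_right h2]
      have := key_antitone h' g hh' h1 hx hy hxy
      linarith
    · rw [max_eq_left h1, max_eq_left h2]
      have := key_antitone h' h'' hh' hhh hx hy hxy
      linarith
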